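/- arXiv:2210.03579 — 9 statements merged into one kernel-verified Lean document; each statement's English description precedes it below -/
import Mathlib

section
/- If X is a T-locally compact topological space and Y is a closed subset of X, then Y with the subspace topology is T-locally compact. -/
def TLocallyCompact (X : Type*) [TopologicalSpace X] : Prop :=
  ∀ (x : X) (U : Set X), IsOpen U → x ∈ U →
    ∃ V : Set X, IsOpen V ∧ x ∈ V ∧ V ⊆ U ∧ IsCompact (frontier V)

theorem isClosed_subspace_tLocallyCompact (X : Type*) [TopologicalSpace X]
    (hX : TLocallyCompact X) (Y : Set X) (hY : IsClosed Y) : TLocallyCompact Y := by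
  intro x U hU hxU
  obtain ⟨U', hU', hUU'⟩ := hU
  obtain ⟨V, hV, hxV, hVU', hVfr⟩ := hX x U' hU' (by rw [← hUU'] at hxU; exact hxU)
  refine ⟨Subtype.val ⁻¹' V, hV.preimage continuous_subtype_val, hxV, ?_, ?_⟩
  · rw [← hUU']; exact fun z hz => hVU' hz
  · have hsub : frontier (Subtype.val ⁻¹' V : Set Y) ⊆ Subtype.val ⁻¹' frontier V := by
      intro z hz
      exact ⟨(continuous_subtype_val.closure_preimage_subset V) hz.1,
        fun h => hz.2 (preimage_interior_subset_interior_preimage continuous_subtype_val h)⟩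
    exact IsCompact.of_isClosed_subset
      (hY.isClosedEmbedding_subtypeVal.isCompact_preimage hVfr)
      isClosed_frontier hsub
end

section
/- If X is a topological space with the discrete topology and Y is a T-locally compact topological space, then the product space X × Y is T-locally compact. -/
section

variable {X Y : Type*} [TopologicalSpace X] [TopologicalSpace Y]

theorem frontier_prod_eq_of_isClopen_left {s : Set X} (hs : IsClopen s) (t : Set Y) :
    frontier (s ×ˢ t) = s ×ˢ frontier t := by
  rw [frontier_prod_eq, hs.frontier_eq, hs.isClosed.closure_eq, Set.empty_prod, Set.union_empty]

theorem TLocallyCompact.prod_of_compact_clopen_basis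
    (hX : ∀ (x : X) (U : Set X), IsOpen U → x ∈ U →
      ∃ C : Set X, IsClopen C ∧ IsCompact C ∧ x ∈ C ∧ C ⊆ U)
    (hY : TLocallyCompact Y) : TLocallyCompact (X × Y) := by
  rintro ⟨x, y⟩ W hW hxy
  obtain ⟨A, B, hA, hB, hxA, hyB, hAB⟩ := isOpen_prod_iff.mp hW x y hxy
  obtain ⟨C, hC, hCc, hxC, hCA⟩ := hX x A hA hxA
  obtain ⟨V, hV, hyV, hVB, hVfr⟩ := hY y B hB hyB
  refine ⟨C ×ˢ V, hC.isOpen.prod hV, ⟨hxC, hyV⟩, (Set.prod_mono hCA hVB).trans hAB, ?_⟩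
  rw [frontier_prod_eq_of_isClopen_left hC]
  exact hCc.prod hVfr

end

theorem discrete_prod_tLocallyCompact (X Y : Type*) [TopologicalSpace X]
    [DiscreteTopology X] [TopologicalSpace Y] (hY : TLocallyCompact Y) :
    TLocallyCompact (X × Y) :=
  TLocallyCompact.prod_of_compact_clopen_basis
    (fun x _ _ hx =>
      ⟨{x}, isClopen_discrete _, isCompact_singleton, rfl, Set.singleton_subset_iff.mpr hx⟩)
    hY
end

section
/- Let X be a topological space and Y a nonempty compact topological space. If the product space X × Y is T-locally compact, then X is T-locally compact. -/
open Set

section Frontier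

variable {X : Type*} [TopologicalSpace X]

theorem frontier_union_subset_union (s t : Set X) :
    frontier (s ∪ t) ⊆ frontier s ∪ frontier t :=
  (frontier_union_subset s t).trans (union_subset_union inter_subset_left inter_subset_right)

theorem TLocallyCompact.exists_isOpen_superset_isCompact_frontier (h : TLocallyCompact X)
    {K U : Set X} (hK : IsCompact K) (hU : IsOpen U) (hKU : K ⊆ U) :
    ∃ W : Set X, IsOpen W ∧ K ⊆ W ∧ W ⊆ U ∧ IsCompact (frontier W) := by
  refine hK.induction_on
    (p := fun K => ∃ W : Set X, IsOpen W ∧ K ⊆ W ∧ W ⊆ U ∧ IsCompact (frontier W))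
    ?empty ?mono ?union ?nhds
  case empty => exact ⟨∅, isOpen_empty, empty_subset _, empty_subset _, by simp⟩
  case mono =>
    rintro s t hst ⟨W, hWo, htW, hWU, hWc⟩
    exact ⟨W, hWo, hst.trans htW, hWU, hWc⟩
  case union =>
    rintro s t ⟨V, hVo, hsV, hVU, hVc⟩ ⟨W, hWo, htW, hWU, hWc⟩
    exact ⟨V ∪ W, hVo.union hWo, union_subset_union hsV htW, union_subset hVU hWU,
      (hVc.union hWc).of_isClosed_subset isClosed_frontier (frontier_union_subset_union V W)⟩
  case nhds =>
    intro x hx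
    obtain ⟨V, hVo, hxV, hVU, hVc⟩ := h x U hU (hKU hx)
    exact ⟨V, mem_nhdsWithin_of_mem_nhds (hVo.mem_nhds hxV), V, hVo, Subset.rfl, hVU, hVc⟩

end Frontier

section Slices

variable {X Y : Type*}

def sliceInterior (W : Set (X × Y)) : Set X := {x | ∀ y, (x, y) ∈ W}

theorem sliceInterior_prod_univ_subset (W : Set (X × Y)) : sliceInterior W ×ˢ univ ⊆ W :=
  fun p hp => hp.1 p.2

theorem sliceInterior_subset_of_subset_prod_univ [Nonempty Y] {W : Set (X × Y)} {U : Set X}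
    (hWU : W ⊆ U ×ˢ univ) : sliceInterior W ⊆ U :=
  fun _ hx => (hWU (hx (Classical.arbitrary Y))).1

variable [TopologicalSpace X] [TopologicalSpace Y]

theorem isOpen_sliceInterior [CompactSpace Y] {W : Set (X × Y)} (hW : IsOpen W) :
    IsOpen (sliceInterior W) := by
  have : sliceInterior W = (Prod.fst '' Wᶜ)ᶜ := by
    ext x
    simp [sliceInterior]
  rw [this]
  exact (isClosedMap_fst_of_compactSpace _ hW.isClosed_compl).isOpen_compl

theorem frontier_sliceInterior_subset [CompactSpace Y] {W : Set (X × Y)} (hW : IsOpen W) :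
    frontier (sliceInterior W) ⊆ Prod.fst '' frontier W := by
  intro x hx
  rw [(isOpen_sliceInterior hW).frontier_eq] at hx
  obtain ⟨hx_closure, hx_not⟩ := hx
  obtain ⟨y, hy⟩ : ∃ y, (x, y) ∉ W := by simpa [sliceInterior] using hx_not
  have hxy_closure : (x, y) ∈ closure W := by
    refine closure_mono (sliceInterior_prod_univ_subset W) ?_
    rw [closure_prod_eq]
    exact ⟨hx_closure, subset_closure (mem_univ y)⟩
  exact ⟨(x, y), hW.frontier_eq ▸ ⟨hxy_closure, hy⟩, rfl⟩

end Slices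

theorem tLocallyCompact_of_prod_compact (X Y : Type*) [TopologicalSpace X]
    [TopologicalSpace Y] [CompactSpace Y] [Nonempty Y]
    (h : TLocallyCompact (X × Y)) : TLocallyCompact X := by
  intro x U hU hx
  obtain ⟨W, hWo, hxW, hWU, hWc⟩ := h.exists_isOpen_superset_isCompact_frontier
    (isCompact_singleton.prod isCompact_univ) (hU.prod isOpen_univ)
    (prod_mono (singleton_subset_iff.2 hx) Subset.rfl)
  refine ⟨sliceInterior W, isOpen_sliceInterior hWo, fun y => hxW ⟨rfl, mem_univ y⟩, ?_, ?_⟩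
  · exact sliceInterior_subset_of_subset_prod_univ hWU
  · exact (hWc.image continuous_fst).of_isClosed_subset isClosed_frontier
      (frontier_sliceInterior_subset hWo)
end

section
/- Let X and Y be nonempty Hausdorff topological spaces. If the product space X × Y is T-locally compact, then both X and Y are T-locally compact. -/
/-! A closed embedding `f : X → Z` transfers T-local compactness from `Z` to `X`: an open `U ∋ x`
is `f ⁻¹' U'` for some open `U'`, and if `V' ⊆ U'` is an open neighbourhood of `f x` with compact
frontier, then `V = f ⁻¹' V'` works because `frontier V ⊆ f ⁻¹' frontier V'`, which is compact.
For nonempty T1 factors, the slices `x ↦ (x, y)` and `y ↦ (x, y)` are such closed embeddings. -/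

open Topology

theorem TLocallyCompact.of_isClosedEmbedding {X Z : Type*} [TopologicalSpace X]
    [TopologicalSpace Z] {f : X → Z} (hf : IsClosedEmbedding f) (hZ : TLocallyCompact Z) :
    TLocallyCompact X := by
  intro x U hU hxU
  obtain ⟨U', hU'_open, rfl⟩ := hf.isInducing.isOpen_iff.mp hU
  obtain ⟨V', hV'_open, hxV', hV'U', hV'_frontier⟩ := hZ (f x) U' hU'_open hxU
  refine ⟨f ⁻¹' V', hV'_open.preimage hf.continuous, hxV', Set.preimage_mono hV'U', ?_⟩
  exact (hf.isCompact_preimage hV'_frontier).of_isClosed_subset isClosed_frontier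
    (hf.continuous.frontier_preimage_subset V')

theorem tLocallyCompact_of_prod_t2 (X Y : Type*) [TopologicalSpace X]
    [TopologicalSpace Y] [T2Space X] [T2Space Y] [Nonempty X] [Nonempty Y]
    (h : TLocallyCompact (X × Y)) : TLocallyCompact X ∧ TLocallyCompact Y := by
  let x : X := Classical.arbitrary X
  let y : Y := Classical.arbitrary Y
  exact ⟨h.of_isClosedEmbedding <| .of_isEmbedding_isClosedMap
      (isEmbedding_prodMkLeft y) (isClosedMap_prodMk_right y),
    h.of_isClosedEmbedding <| .of_isEmbedding_isClosedMap
      (isEmbedding_prodMkRight x) (isClosedMap_prodMk_left x)⟩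
end

section
/- Let {X_i : i ∈ I} be a family of nonempty Hausdorff topological spaces indexed by a nonempty set I. If the product space ∏_{i ∈ I} X_i (with the product topology) is T-locally compact, then each X_i is T-locally compact. -/
/-! Each factor `X i` sits in the product as a closed slice `Function.update f i`, and
T-local compactness passes to closed subspaces: pull back a neighbourhood `V` from the
product; the frontier of the preimage lies in the preimage of the frontier, which is compact
because preimages of compact sets under a closed embedding are compact. -/

open Topology

theorem Topology.IsClosedEmbedding.tLocallyCompact {X Y : Type*} [TopologicalSpace X]
    [TopologicalSpace Y] {f : X → Y} (hf : IsClosedEmbedding f) (hY : TLocallyCompact Y) :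
    TLocallyCompact X := by
  intro x U hU hxU
  obtain ⟨U', hU'open, rfl⟩ := hf.isInducing.isOpen_iff.mp hU
  obtain ⟨V, hVopen, hxV, hVU', hVfrontier⟩ := hY (f x) U' hU'open hxU
  refine ⟨f ⁻¹' V, hVopen.preimage hf.continuous, hxV, Set.preimage_mono hVU', ?_⟩
  exact (hf.isCompact_preimage hVfrontier).of_isClosed_subset isClosed_frontier
    (hf.continuous.frontier_preimage_subset V)

theorem tLocallyCompact_of_pi_t2_general {ι : Type*} (X : ι → Type*)
    [∀ i, TopologicalSpace (X i)] [∀ i, T2Space (X i)] [∀ i, Nonempty (X i)]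
    (h : TLocallyCompact (∀ i, X i)) : ∀ i, TLocallyCompact (X i) := by
  classical
  intro i
  exact (isClosedEmbedding_update (fun j => Classical.arbitrary (X j)) i).tLocallyCompact h

theorem tLocallyCompact_of_pi_t2 {ι : Type*} [Nonempty ι] (X : ι → Type*)
    [∀ i, TopologicalSpace (X i)] [∀ i, T2Space (X i)] [∀ i, Nonempty (X i)]
    (h : TLocallyCompact (∀ i, X i)) : ∀ i, TLocallyCompact (X i) :=
  tLocallyCompact_of_pi_t2_general X h
end

section
/- The space ℚ of rational numbers, with the subspace topology inherited from ℝ, is T-locally compact (although it is not locally compact). -/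
open TopologicalSpace

theorem tLocallyCompact_of_isTopologicalBasis_clopens {X : Type*} [TopologicalSpace X]
    (h : IsTopologicalBasis {s : Set X | IsClopen s}) : TLocallyCompact X := by
  intro x U hU hxU
  obtain ⟨V, hV, hxV, hVU⟩ := h.exists_subset_of_mem_open hxU hU
  exact ⟨V, hV.isOpen, hxV, hVU, hV.frontier_eq ▸ isCompact_empty⟩

theorem tLocallyCompact_of_countable {X : Type*} [TopologicalSpace X]
    [CompletelyRegularSpace X] [Countable X] : TLocallyCompact X :=
  tLocallyCompact_of_isTopologicalBasis_clopens <|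
    CompletelyRegularSpace.isTopologicalBasis_clopens_of_cardinalMk_lt_continuum <|
      (Cardinal.mk_le_aleph0_iff.mpr inferInstance).trans_lt Cardinal.aleph0_lt_continuum

theorem not_locallyCompactSpace_of_interior_compact_eq_empty {X : Type*} [TopologicalSpace X]
    [Nonempty X] (h : ∀ K : Set X, IsCompact K → interior K = ∅) :
    ¬ LocallyCompactSpace X := by
  intro _
  obtain ⟨x⟩ := ‹Nonempty X›
  obtain ⟨K, hK, hKx⟩ := exists_compact_mem_nhds x
  simpa [h K hK] using mem_interior_iff_mem_nhds.mpr hKx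

theorem rat_tLocallyCompact : TLocallyCompact ℚ ∧ ¬ LocallyCompactSpace ℚ :=
  ⟨tLocallyCompact_of_countable,
    not_locallyCompactSpace_of_interior_compact_eq_empty fun _ ↦ Rat.interior_compact_eq_empty⟩
end

section
/- Let X be an infinite set, p ∈ X, and equip X with the particular point topology: a subset U ⊆ X is open if and only if U = ∅ or p ∈ U. Then X with this topology is not T-locally compact. -/
-- `Set` stays closed around the main theorem, where `Infinite X` would otherwise be ambiguous.
section

open Set

variable {X : Type*} [TopologicalSpace X]

theorem TLocallyCompact.isCompact_frontier_singleton (hX : TLocallyCompact X) {x : X}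
    (hx : IsOpen ({x} : Set X)) : IsCompact (frontier ({x} : Set X)) := by
  obtain ⟨V, -, hxV, hVx, hV⟩ := hX x {x} hx rfl
  rwa [subset_antisymm hVx (singleton_subset_iff.2 hxV)] at hV

theorem dense_singleton_of_forall_mem_isOpen {p : X}
    (hp : ∀ U : Set X, IsOpen U → U.Nonempty → p ∈ U) : Dense ({p} : Set X) :=
  dense_iff_inter_open.2 fun U hU hne => ⟨p, hp U hU hne, rfl⟩

theorem IsCompact.finite_of_isOpen_pair {p : X} (hp : ∀ y : X, IsOpen ({p, y} : Set X))
    {K : Set X} (hK : IsCompact K) : K.Finite := by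
  obtain ⟨s, hs⟩ := hK.elim_finite_subcover (fun y : X => ({p, y} : Set X)) hp
    fun y _ => mem_iUnion.2 ⟨y, mem_insert_of_mem _ rfl⟩
  exact (s.finite_toSet.biUnion fun y _ => (finite_singleton y).insert p).subset hs

end

theorem particularPoint_not_tLocallyCompact (X : Type*) [TopologicalSpace X]
    (hX : Infinite X) (p : X) (h : ∀ U : Set X, IsOpen U ↔ U = ∅ ∨ p ∈ U) :
    ¬ TLocallyCompact X := by
  intro hTLC
  have hp_open : IsOpen ({p} : Set X) := (h _).2 (Or.inr rfl)
  have hdense : Dense ({p} : Set X) :=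
    dense_singleton_of_forall_mem_isOpen fun U hU hne =>
      ((h U).1 hU).resolve_left hne.ne_empty
  have hcompact : IsCompact ({p}ᶜ : Set X) := by
    rw [Set.compl_eq_univ_sdiff, ← hdense.closure_eq, ← hp_open.frontier_eq]
    exact hTLC.isCompact_frontier_singleton hp_open
  exact (Set.finite_singleton p).infinite_compl
    (hcompact.finite_of_isOpen_pair fun y => (h _).2 (Or.inr (Set.mem_insert p {y})))
end

section
/- The product space ℚ × ℝ, where ℚ carries the subspace topology from ℝ and ℝ its usual topology, is not T-locally compact. -/
open Set Topology

section Slices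

variable {X Y : Type*} [TopologicalSpace X] [TopologicalSpace Y]

theorem fst_image_subset_fst_image_frontier [PreconnectedSpace Y] {V : Set (X × Y)} {B : Set Y}
    (hB : B ≠ univ) (hVB : V ⊆ univ ×ˢ B) : Prod.fst '' V ⊆ Prod.fst '' frontier V := by
  rintro _ ⟨⟨x, y⟩, hxy, rfl⟩
  have hslice_ne : (Prod.mk x ⁻¹' V).Nonempty := ⟨y, hxy⟩
  have hslice_proper : Prod.mk x ⁻¹' V ≠ univ := fun h ↦
    hB (eq_univ_of_forall fun z ↦ (hVB (eq_univ_iff_forall.1 h z)).2)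
  obtain ⟨z, hz⟩ := nonempty_frontier_iff.2 ⟨hslice_ne, hslice_proper⟩
  exact ⟨(x, z), (Continuous.prodMk_right x).frontier_preimage_subset V hz, rfl⟩

theorem TLocallyCompact.weaklyLocallyCompactSpace_left [PreconnectedSpace Y] [T1Space Y]
    [Nontrivial Y] (h : TLocallyCompact (X × Y)) : WeaklyLocallyCompactSpace X := by
  refine ⟨fun x ↦ ?_⟩
  obtain ⟨y, y', hyy'⟩ := exists_pair_ne Y
  have hU : IsOpen (univ ×ˢ {y'}ᶜ : Set (X × Y)) := isOpen_univ.prod isOpen_compl_singleton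
  obtain ⟨V, hVo, hxyV, hVU, hfrontier⟩ := h (x, y) _ hU ⟨mem_univ x, hyy'⟩
  have hcover := fst_image_subset_fst_image_frontier (compl_ne_univ.2 (singleton_nonempty y')) hVU
  exact ⟨_, hfrontier.image continuous_fst,
    Filter.mem_of_superset ((isOpenMap_fst V hVo).mem_nhds ⟨_, hxyV, rfl⟩) hcover⟩

end Slices

theorem Rat.not_weaklyLocallyCompactSpace : ¬ WeaklyLocallyCompactSpace ℚ := fun _ ↦ by
  obtain ⟨K, hK, hKnhds⟩ := exists_compact_mem_nhds (0 : ℚ)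
  simpa [Rat.interior_compact_eq_empty hK] using mem_interior_iff_mem_nhds.2 hKnhds

theorem rat_prod_real_not_tLocallyCompact : ¬ TLocallyCompact (ℚ × ℝ) := fun h ↦
  Rat.not_weaklyLocallyCompactSpace h.weaklyLocallyCompactSpace_left
end

section
/- In the proof that ℚ × ℝ is not T-locally compact: let N = ((0,1) × (0,1)) ∩ (ℚ × ℝ) viewed as a subset of the product space ℚ × ℝ. Then for every nonempty open subset U of ℚ × ℝ with U ⊆ N, the frontier of U (taken in ℚ × ℝ) is not compact. -/
/-!
Every vertical slice `{r | (q, r) ∈ U}` of `U ⊆ N` is a proper subset of `ℝ`, and the slices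
through a point `(q₀, r₀) ∈ U` are nonempty for all `q` in a neighbourhood of `q₀`. Since `ℝ` is
connected, each such slice has a boundary point `r`, and then `(q, r) ∈ frontier U`. So the
projection of `frontier U` to `ℚ` contains a neighbourhood of `q₀`; but compact subsets of `ℚ`
have empty interior.
-/

open Set

theorem mem_image_fst_frontier_of_slice {X Y : Type*} [TopologicalSpace X] [TopologicalSpace Y]
    [PreconnectedSpace Y] {U : Set (X × Y)} {x : X} (hne : (Prod.mk x ⁻¹' U).Nonempty)
    (hne_univ : Prod.mk x ⁻¹' U ≠ univ) : x ∈ Prod.fst '' frontier U := by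
  obtain ⟨y, hy⟩ := nonempty_frontier_iff.mpr ⟨hne, hne_univ⟩
  exact ⟨(x, y), (Continuous.prodMk_right x).frontier_preimage_subset U hy, rfl⟩

theorem Rat.not_isCompact_frontier_prod {Y : Type*} [TopologicalSpace Y] [PreconnectedSpace Y]
    {U : Set (ℚ × Y)} (hU : IsOpen U) (hne : U.Nonempty)
    (hslice : ∀ q : ℚ, Prod.mk q ⁻¹' U ≠ univ) : ¬ IsCompact (frontier U) := by
  intro hcompact
  obtain ⟨⟨q₀, y₀⟩, hq₀⟩ := hne
  have hopen : IsOpen {q : ℚ | (q, y₀) ∈ U} := hU.preimage (Continuous.prodMk_left y₀)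
  have hsub : {q : ℚ | (q, y₀) ∈ U} ⊆ Prod.fst '' frontier U := fun q hq =>
    mem_image_fst_frontier_of_slice ⟨y₀, hq⟩ (hslice q)
  have hinterior : q₀ ∈ interior (Prod.fst '' frontier U) := interior_maximal hsub hopen hq₀
  rw [Rat.interior_compact_eq_empty (hcompact.image continuous_fst)] at hinterior
  exact hinterior

theorem frontier_not_compact_in_rat_prod_real
    (N : Set (ℚ × ℝ)) (hN : N = {q : ℚ × ℝ | (q.1 : ℝ) ∈ Set.Ioo (0 : ℝ) 1 ∧ q.2 ∈ Set.Ioo (0 : ℝ) 1})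
    (U : Set (ℚ × ℝ)) (hU : IsOpen U) (hne : U.Nonempty) (hUN : U ⊆ N) :
    ¬ IsCompact (frontier U) := by
  refine Rat.not_isCompact_frontier_prod hU hne fun q hq => ?_
  have hU_one : (1 : ℝ) ∈ Prod.mk q ⁻¹' U := hq ▸ mem_univ 1
  have hN_one := hUN hU_one
  rw [hN] at hN_one
  exact lt_irrefl _ hN_one.2.2
end
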